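/- Let $\phi$ be a harmonic $\mathrm{Spin}^c$-spinor on an $n$-dimensional Riemannian $\mathrm{Spin}^c$-manifold, i.e. $\mathcal{D}_A \phi = 0$ for the Dirac operator $\mathcal{D}_A$ associated to a Hermitian connection $A$ on the determinant line bundle. Then at every point where $\phi \ne 0$, the refined Kato inequality $|\nabla |\phi||^2 \le \frac{n-1}{n} |\nabla^A \phi|^2$ holds. -/

import Mathlib

open scoped RealInnerProductSpace

/-
At a point, write `a i = ⟪v i, u⟫` with `u = φ / ‖φ‖`. The Clifford relations and
skew-adjointness make `(c i u)_i` orthonormal, so `ψ = ∑ a j • c j u` has `‖ψ‖² = ∑ a i²`.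
Test the family `v` against `W i = c i ψ + (n a i) • u`: the Dirac equation kills the
`c i ψ` part of `∑ ⟪v i, W i⟫`, leaving `n ∑ a i²`, while `∑ ‖W i‖² = n (n - 1) ∑ a i²`.
Cauchy–Schwarz for the two families gives `n ∑ a i² ≤ (n - 1) ∑ ‖v i‖²`; the weight `n` in
`W` is the one that optimises this bound.
-/

section Clifford

variable {E : Type*} [NormedAddCommGroup E] [InnerProductSpace ℝ E] {ι : Type*}

theorem sq_sum_inner_le_sum_norm_sq_mul_sum_norm_sq [Fintype ι] (x y : ι → E) :
    (∑ i, ⟪x i, y i⟫) ^ 2 ≤ (∑ i, ‖x i‖ ^ 2) * ∑ i, ‖y i‖ ^ 2 := by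
  have h := real_inner_mul_inner_self_le (WithLp.toLp 2 x : PiLp 2 fun _ : ι => E)
    (WithLp.toLp 2 y)
  simpa only [PiLp.inner_apply, real_inner_self_eq_norm_sq, sq] using h

theorem sum_inner_apply_eq_zero_of_sum_apply_eq_zero [Fintype ι] {c : ι → E →ₗ[ℝ] E}
    (hSkew : ∀ i (u w : E), ⟪c i u, w⟫ = -⟪u, c i w⟫) {v : ι → E} (hDirac : ∑ i, c i (v i) = 0)
    (ψ : E) : ∑ i, ⟪v i, c i ψ⟫ = 0 :=
  calc ∑ i, ⟪v i, c i ψ⟫ = -∑ i, ⟪c i (v i), ψ⟫ := by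
        simp only [hSkew, Finset.sum_neg_distrib, neg_neg]
    _ = 0 := by rw [← sum_inner, hDirac, inner_zero_left, neg_zero]

def IsCliffordFamily [DecidableEq ι] (c : ι → E →ₗ[ℝ] E) : Prop :=
  ∀ i j, c i ∘ₗ c j + c j ∘ₗ c i = if i = j then (-2 : ℝ) • LinearMap.id else 0

namespace IsCliffordFamily

variable [DecidableEq ι] {c : ι → E →ₗ[ℝ] E}

theorem apply_apply_self (hc : IsCliffordFamily c) (i : ι) (w : E) : c i (c i w) = -w := by
  have h := LinearMap.congr_fun (hc i i) w
  simp only [if_true, LinearMap.add_apply, LinearMap.comp_apply, LinearMap.smul_apply,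
    LinearMap.id_apply] at h
  linear_combination (norm := module) (1 / 2 : ℝ) • h

theorem apply_apply_of_ne (hc : IsCliffordFamily c) {i j : ι} (hij : i ≠ j) (w : E) :
    c i (c j w) = -c j (c i w) := by
  have h := LinearMap.congr_fun (hc i j) w
  simp only [if_neg hij, LinearMap.add_apply, LinearMap.comp_apply, LinearMap.zero_apply] at h
  exact eq_neg_of_add_eq_zero_left h

theorem norm_apply (hc : IsCliffordFamily c) (hSkew : ∀ i (u w : E), ⟪c i u, w⟫ = -⟪u, c i w⟫)
    (i : ι) (w : E) : ‖c i w‖ = ‖w‖ := by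
  rw [norm_eq_sqrt_real_inner, norm_eq_sqrt_real_inner (F := E) w, hSkew, hc.apply_apply_self,
    inner_neg_right, neg_neg]

theorem orthonormal_apply (hc : IsCliffordFamily c)
    (hSkew : ∀ i (u w : E), ⟪c i u, w⟫ = -⟪u, c i w⟫) {u : E} (hu : ‖u‖ = 1) :
    Orthonormal ℝ fun i ↦ c i u := by
  refine ⟨fun i ↦ (hc.norm_apply hSkew i u).trans hu, fun i j hij ↦ ?_⟩
  have h₁ := hSkew i u (c j u)
  have h₂ : ⟪c i u, c j u⟫ = ⟪u, c i (c j u)⟫ := by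
    rw [real_inner_comm, hSkew, hc.apply_apply_of_ne hij, inner_neg_right]
  simp only
  linarith

variable [Fintype ι]

theorem norm_sum_smul_apply_sq (hc : IsCliffordFamily c)
    (hSkew : ∀ i (u w : E), ⟪c i u, w⟫ = -⟪u, c i w⟫) {u : E} (hu : ‖u‖ = 1) (a : ι → ℝ) :
    ‖∑ j, a j • c j u‖ ^ 2 = ∑ j, a j ^ 2 := by
  rw [← real_inner_self_eq_norm_sq, (hc.orthonormal_apply hSkew hu).inner_sum]
  simp only [conj_trivial, sq]

theorem inner_apply_sum_smul_apply (hc : IsCliffordFamily c)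
    (hSkew : ∀ i (u w : E), ⟪c i u, w⟫ = -⟪u, c i w⟫) {u : E} (hu : ‖u‖ = 1)
    (a : ι → ℝ) (i : ι) : ⟪c i (∑ j, a j • c j u), u⟫ = -a i := by
  rw [hSkew, (hc.orthonormal_apply hSkew hu).inner_left_fintype, conj_trivial]

theorem card_mul_sum_inner_sq_le_of_sum_apply_eq_zero [Nonempty ι] (hc : IsCliffordFamily c)
    (hSkew : ∀ i (u w : E), ⟪c i u, w⟫ = -⟪u, c i w⟫) {u : E} (hu : ‖u‖ = 1)
    {v : ι → E} (hDirac : ∑ i, c i (v i) = 0) :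
    Fintype.card ι * ∑ i, ⟪v i, u⟫ ^ 2 ≤ (Fintype.card ι - 1) * ∑ i, ‖v i‖ ^ 2 := by
  set n : ℝ := (Fintype.card ι : ℝ)
  set a : ι → ℝ := fun i ↦ ⟪v i, u⟫
  set T := ∑ i, a i ^ 2
  set ψ := ∑ j, a j • c j u
  set W : ι → E := fun i ↦ c i ψ + (n * a i) • u
  have hvW : ∑ i, ⟪v i, W i⟫ = n * T := by
    simp only [W, inner_add_right, real_inner_smul_right, Finset.sum_add_distrib,
      sum_inner_apply_eq_zero_of_sum_apply_eq_zero hSkew hDirac, zero_add, T, Finset.mul_sum]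
    exact Finset.sum_congr rfl fun i _ ↦ by ring
  have hW : ∑ i, ‖W i‖ ^ 2 = n * (n - 1) * T :=
    calc ∑ i, ‖W i‖ ^ 2 = ∑ i, (T + (n ^ 2 - 2 * n) * a i ^ 2) :=
          Finset.sum_congr rfl fun i _ ↦ by
            rw [norm_add_sq_real, hc.norm_apply hSkew, hc.norm_sum_smul_apply_sq hSkew hu,
              real_inner_smul_right, hc.inner_apply_sum_smul_apply hSkew hu, norm_smul, hu,
              Real.norm_eq_abs, mul_one, sq_abs]
            ring
      _ = n * (n - 1) * T := by
        rw [Finset.sum_add_distrib, ← Finset.mul_sum, Finset.sum_const, Finset.card_univ,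
          nsmul_eq_mul]
        ring
  have hCS := sq_sum_inner_le_sum_norm_sq_mul_sum_norm_sq v W
  rw [hvW, hW] at hCS
  have hn : 1 ≤ n := by simp [n, Nat.one_le_iff_ne_zero]
  rcases (show 0 ≤ T by positivity).eq_or_lt with hT | hT
  · rw [← hT, mul_zero]
    exact mul_nonneg (by linarith) (by positivity)
  · refine le_of_mul_le_mul_left ?_ (by positivity : 0 < n * T)
    linear_combination hCS

end IsCliffordFamily

end Clifford

/-- refined Kato inequality, pointwise form. Let `φ` be a harmonic
`Spin^c`-spinor on an `n`-dimensional Riemannian `Spin^c`-manifold. At a point where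
`φ ≠ 0` one has `|∇|φ||² ≤ (n-1)/n |∇^A φ|²`.  Here `E` is the spinor fiber at the
point, `c i` is Clifford multiplication by the `i`-th vector of an orthonormal frame
(satisfying the Clifford relations and skew-adjointness), `v i = ∇^A_{e_i} φ` is the
covariant derivative, the Dirac equation reads `∑ i, c i (v i) = 0`, and
`∂_i |φ| = ⟪v i, φ⟫ / ‖φ‖`, so `|∇|φ||² = ∑ i (⟪v i, φ⟫/‖φ‖)²`. -/
theorem stmt2 {E : Type*} [NormedAddCommGroup E] [InnerProductSpace ℝ E]
    (n : ℕ) (hn : 0 < n)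
    (c : Fin n → E →ₗ[ℝ] E)
    -- Clifford relations
    (hCliff : ∀ i j, c i ∘ₗ c j + c j ∘ₗ c i =
      if i = j then (-2 : ℝ) • LinearMap.id else 0)
    -- skew-adjointness of Clifford multiplication
    (hSkew : ∀ i (u w : E), ⟪c i u, w⟫ = -⟪u, c i w⟫)
    (φ : E) (hφ : φ ≠ 0)
    (v : Fin n → E)
    -- the Dirac equation `𝒟_A φ = 0`
    (hDirac : ∑ i, c i (v i) = 0) :
    ∑ i, (⟪v i, φ⟫ / ‖φ‖) ^ 2 ≤ ((n : ℝ) - 1) / n * ∑ i, ‖v i‖ ^ 2 := by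
  have : Nonempty (Fin n) := ⟨⟨0, hn⟩⟩
  have hu : ‖‖φ‖⁻¹ • φ‖ = 1 := norm_smul_inv_norm hφ
  have key :=
    IsCliffordFamily.card_mul_sum_inner_sq_le_of_sum_apply_eq_zero hCliff hSkew hu hDirac
  rw [Fintype.card_fin] at key
  have hrescale (i : Fin n) : ⟪v i, φ⟫ / ‖φ‖ = ⟪v i, ‖φ‖⁻¹ • φ⟫ := by
    rw [real_inner_smul_right, div_eq_inv_mul]
  simp only [hrescale]
  rw [div_mul_eq_mul_div, le_div_iff₀ (by exact_mod_cast hn)]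
  linarith
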